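/- Let b, c : ℝ → ℝ be smooth, let m₁, m₂, m₃ ∈ ℝ satisfy m₁ = m₃² − m₂², define m(y) = m₁·y + m₂·B(y) + m₃·C(y), and set Q(t,x) = exp(m₂t + m₃x). Then for every smooth function u : ℝ² → ℝ (not necessarily a solution), the current generated by the time-translation characteristic p = −∂ₜu and the adjoint-symmetry Q, namely Ψᵗ = −Q·∂ₜ²u − (b(u) − m₂)·Q·∂ₜu and Ψˣ = Q·∂ₜ∂ₓu − (c(u) + m₃)·Q·∂ₜu, satisfies ∂ₜ(Ψᵗ + Q·F[u]) + ∂ₓΨˣ = m₂·Q·F[u] on ℝ². (Thus the multiplier of this symmetry-generated conservation law is ∂ₜQ = m₂·Q.) -/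

import Mathlib

noncomputable section

open Real

/-- Partial derivative in the first (time) variable. -/
def Dt (u : ℝ → ℝ → ℝ) : ℝ → ℝ → ℝ := fun t x => deriv (fun s => u s x) t

/-- Partial derivative in the second (space) variable. -/
def Dx (u : ℝ → ℝ → ℝ) : ℝ → ℝ → ℝ := fun t x => deriv (fun s => u t s) x

/-- Smoothness (C^∞) of a function of two real variables. -/
def Smooth2 (u : ℝ → ℝ → ℝ) : Prop := ContDiff ℝ (⊤ : ℕ∞) (fun p : ℝ × ℝ => u p.1 p.2)
/-- The semilinear wave operator F[u] = ∂ₜ²u − ∂ₓ²u + b(u)∂ₜu + c(u)∂ₓu + m(u). -/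
def Fop (b c m : ℝ → ℝ) (u : ℝ → ℝ → ℝ) : ℝ → ℝ → ℝ := fun t x =>
  Dt (Dt u) t x - Dx (Dx u) t x + b (u t x) * Dt u t x + c (u t x) * Dx u t x + m (u t x)

/-- The adjoint linearized operator along u:
L*[u]q = ∂ₜ²q − ∂ₓ²q − b(u)∂ₜq − c(u)∂ₓq + m′(u)q. -/
def Lstar (b c m : ℝ → ℝ) (u q : ℝ → ℝ → ℝ) : ℝ → ℝ → ℝ := fun t x =>
  Dt (Dt q) t x - Dx (Dx q) t x - b (u t x) * Dt q t x - c (u t x) * Dx q t x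
    + deriv m (u t x) * q t x

/-! The current `Ψ` of any `u, p, q` satisfies `∂ₜΨᵗ + ∂ₓΨˣ = q·F'[u]p − p·L*[u]q`.
Because `F` is autonomous, `F'[u](∂ₜu) = ∂ₜ(F[u])`; and since `m' = m₁ + m₂b + m₃c`,
`L*[u]Q = (m₂² − m₃² + m₁)Q = 0`. So for `p = −∂ₜu`, `q = Q` we get
`∂ₜΨᵗ + ∂ₓΨˣ = −Q ∂ₜF[u]`, and adding `∂ₜ(Q F[u])` leaves `(∂ₜQ) F[u] = m₂ Q F[u]`. -/

namespace Smooth2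

variable {u : ℝ → ℝ → ℝ}

lemma hasDerivAt_t (hu : Smooth2 u) (t x : ℝ) :
    HasDerivAt (fun s => u s x) (Dt u t x) t :=
  ((hu.comp (contDiff_id.prodMk contDiff_const)).differentiable (by simp) t).hasDerivAt

lemma hasDerivAt_x (hu : Smooth2 u) (t x : ℝ) :
    HasDerivAt (fun s => u t s) (Dx u t x) x :=
  ((hu.comp (contDiff_const.prodMk contDiff_id)).differentiable (by simp) x).hasDerivAt

lemma Dt_eq_fderiv (hu : Smooth2 u) (t x : ℝ) :
    Dt u t x = fderiv ℝ (fun p : ℝ × ℝ => u p.1 p.2) (t, x) (1, 0) :=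
  ((hu.differentiable (by simp) (t, x)).hasFDerivAt.comp_hasDerivAt t
    ((hasDerivAt_id t).prodMk (hasDerivAt_const t x))).deriv.symm ▸ rfl

lemma Dx_eq_fderiv (hu : Smooth2 u) (t x : ℝ) :
    Dx u t x = fderiv ℝ (fun p : ℝ × ℝ => u p.1 p.2) (t, x) (0, 1) :=
  ((hu.differentiable (by simp) (t, x)).hasFDerivAt.comp_hasDerivAt x
    ((hasDerivAt_const x t).prodMk (hasDerivAt_id x))).deriv.symm ▸ rfl

lemma contDiff_fderiv_apply (hu : Smooth2 u) (v : ℝ × ℝ) :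
    ContDiff ℝ (⊤ : ℕ∞) (fun p : ℝ × ℝ => fderiv ℝ (fun q : ℝ × ℝ => u q.1 q.2) p v) :=
  (hu.fderiv_right (m := (⊤ : ℕ∞)) le_rfl).clm_apply contDiff_const

lemma dt (hu : Smooth2 u) : Smooth2 (Dt u) := by
  unfold Smooth2
  simpa only [hu.Dt_eq_fderiv] using hu.contDiff_fderiv_apply (1, 0)

lemma dx (hu : Smooth2 u) : Smooth2 (Dx u) := by
  unfold Smooth2
  simpa only [hu.Dx_eq_fderiv] using hu.contDiff_fderiv_apply (0, 1)

lemma Dt_Dx_comm (hu : Smooth2 u) : Dt (Dx u) = Dx (Dt u) := by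
  funext t x
  set F := fun p : ℝ × ℝ => u p.1 p.2
  have hdF : Differentiable ℝ (fderiv ℝ F) :=
    (hu.fderiv_right (m := (⊤ : ℕ∞)) le_rfl).differentiable (by simp)
  have hpartial : ∀ v w : ℝ × ℝ,
      fderiv ℝ (fun p => fderiv ℝ F p v) (t, x) w = fderiv ℝ (fderiv ℝ F) (t, x) w v := by
    intro v w
    rw [fderiv_clm_apply (hdF (t, x)) (differentiableAt_const v)]
    simp
  have hsymm : IsSymmSndFDerivAt ℝ F (t, x) :=
    hu.contDiffAt.isSymmSndFDerivAt
      (by simp [minSmoothness_of_isRCLikeNormedField]; exact WithTop.coe_le_coe.2 le_top)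
  rw [hu.dx.Dt_eq_fderiv, hu.dt.Dx_eq_fderiv]
  simp only [hu.Dx_eq_fderiv, hu.Dt_eq_fderiv]
  rw [hpartial, hpartial, hsymm]

end Smooth2

lemma Dt_eq_of_hasDerivAt {f : ℝ → ℝ → ℝ} {t x f' : ℝ}
    (h : HasDerivAt (fun s => f s x) f' t) : Dt f t x = f' := h.deriv

lemma Dx_eq_of_hasDerivAt {f : ℝ → ℝ → ℝ} {t x f' : ℝ}
    (h : HasDerivAt (fun s => f t s) f' x) : Dx f t x = f' := h.deriv

lemma Dt_const_mul (k : ℝ) (f : ℝ → ℝ → ℝ) :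
    Dt (fun t x => k * f t x) = fun t x => k * Dt f t x := by
  funext t x
  exact congrFun (deriv_const_mul_field' k) t

lemma Dx_const_mul (k : ℝ) (f : ℝ → ℝ → ℝ) :
    Dx (fun t x => k * f t x) = fun t x => k * Dx f t x := by
  funext t x
  exact congrFun (deriv_const_mul_field' k) x

lemma Dx_neg (f : ℝ → ℝ → ℝ) (t x : ℝ) : Dx (fun t x => -f t x) t x = -Dx f t x :=
  deriv.fun_neg

lemma Dt_exp_affine (α β : ℝ) :
    Dt (fun t x => exp (α * t + β * x)) = fun t x => α * exp (α * t + β * x) := by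
  funext t x
  rw [Dt_eq_of_hasDerivAt ((((hasDerivAt_id' t).const_mul α).add_const (β * x)).exp)]
  ring

lemma Dx_exp_affine (α β : ℝ) :
    Dx (fun t x => exp (α * t + β * x)) = fun t x => β * exp (α * t + β * x) := by
  funext t x
  rw [Dx_eq_of_hasDerivAt ((((hasDerivAt_id' x).const_mul β).const_add (α * t)).exp)]
  ring

lemma smooth2_exp_affine (α β : ℝ) : Smooth2 (fun t x => exp (α * t + β * x)) := by
  unfold Smooth2
  fun_prop

def currentT (b : ℝ → ℝ) (u p q : ℝ → ℝ → ℝ) : ℝ → ℝ → ℝ := fun t x =>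
  q t x * Dt p t x + (b (u t x) * q t x - Dt q t x) * p t x

def currentX (c : ℝ → ℝ) (u p q : ℝ → ℝ → ℝ) : ℝ → ℝ → ℝ := fun t x =>
  -(q t x * Dx p t x) + (c (u t x) * q t x + Dx q t x) * p t x

def linearizedFop (b c m : ℝ → ℝ) (u p : ℝ → ℝ → ℝ) : ℝ → ℝ → ℝ := fun t x =>
  Dt (Dt p) t x - Dx (Dx p) t x + b (u t x) * Dt p t x + c (u t x) * Dx p t x
    + (deriv b (u t x) * Dt u t x + deriv c (u t x) * Dx u t x + deriv m (u t x)) * p t x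

section Current

variable {b c : ℝ → ℝ} {u p q : ℝ → ℝ → ℝ}

lemma smooth2_currentT (hb : ContDiff ℝ (⊤ : ℕ∞) b) (hu : Smooth2 u) (hp : Smooth2 p)
    (hq : Smooth2 q) : Smooth2 (currentT b u p q) := by
  have hpt := hp.dt
  have hqt := hq.dt
  unfold Smooth2 currentT at *
  fun_prop

theorem Dt_currentT_add_Dx_currentX (m : ℝ → ℝ) (hb : Differentiable ℝ b)
    (hc : Differentiable ℝ c) (hu : Smooth2 u) (hp : Smooth2 p) (hq : Smooth2 q) (t x : ℝ) :
    Dt (currentT b u p q) t x + Dx (currentX c u p q) t x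
      = q t x * linearizedFop b c m u p t x - p t x * Lstar b c m u q t x := by
  have hbu : HasDerivAt (fun s => b (u s x)) (deriv b (u t x) * Dt u t x) t :=
    (hb _).hasDerivAt.comp t (hu.hasDerivAt_t t x)
  have hcu : HasDerivAt (fun s => c (u t s)) (deriv c (u t x) * Dx u t x) x :=
    (hc _).hasDerivAt.comp x (hu.hasDerivAt_x t x)
  have hΨt := ((hq.hasDerivAt_t t x).mul (hp.dt.hasDerivAt_t t x)).add
    (((hbu.mul (hq.hasDerivAt_t t x)).sub (hq.dt.hasDerivAt_t t x)).mul (hp.hasDerivAt_t t x))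
  have hΨx := ((hq.hasDerivAt_x t x).mul (hp.dx.hasDerivAt_x t x)).neg.add
    (((hcu.mul (hq.hasDerivAt_x t x)).add (hq.dx.hasDerivAt_x t x)).mul (hp.hasDerivAt_x t x))
  rw [Dt_eq_of_hasDerivAt (f := currentT b u p q) hΨt,
    Dx_eq_of_hasDerivAt (f := currentX c u p q) hΨx]
  simp only [linearizedFop, Lstar, Pi.mul_apply, Pi.sub_apply, Pi.add_apply]
  ring

end Current

/-- `∂ₜu` is a symmetry characteristic, since `F` does not depend on `t` explicitly. -/
theorem hasDerivAt_Fop {b c m : ℝ → ℝ} {u : ℝ → ℝ → ℝ} (hb : Differentiable ℝ b)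
    (hc : Differentiable ℝ c) (hm : Differentiable ℝ m) (hu : Smooth2 u) (t x : ℝ) :
    HasDerivAt (fun s => Fop b c m u s x) (linearizedFop b c m u (Dt u) t x) t := by
  have hut := hu.hasDerivAt_t t x
  have h := ((((hu.dt.dt.hasDerivAt_t t x).sub (hu.dx.dx.hasDerivAt_t t x)).add
    (((hb _).hasDerivAt.comp t hut).mul (hu.dt.hasDerivAt_t t x))).add
    (((hc _).hasDerivAt.comp t hut).mul (hu.dx.hasDerivAt_t t x))).add
    ((hm _).hasDerivAt.comp t hut)
  refine h.congr_deriv ?_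
  rw [hu.dx.Dt_Dx_comm, hu.Dt_Dx_comm]
  simp only [linearizedFop, Function.comp_apply]
  ring

theorem hasDerivAt_of_eq_linear_add_integrals {b c m : ℝ → ℝ} (hb : Continuous b)
    (hc : Continuous c) {m₁ m₂ m₃ : ℝ}
    (hm : ∀ y, m y = m₁ * y + m₂ * (∫ s in (0:ℝ)..y, b s) + m₃ * ∫ s in (0:ℝ)..y, c s) (y : ℝ) :
    HasDerivAt m (m₁ + m₂ * b y + m₃ * c y) y := by
  rw [funext hm]
  exact ((((hasDerivAt_id' y).const_mul m₁).add
    ((hb.integral_hasStrictDerivAt 0 y).hasDerivAt.const_mul m₂)).add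
    ((hc.integral_hasStrictDerivAt 0 y).hasDerivAt.const_mul m₃)).congr_deriv (by ring)

theorem Lstar_exp_affine_eq_zero {b c m : ℝ → ℝ} {α β : ℝ}
    (hm : ∀ y, HasDerivAt m (β ^ 2 - α ^ 2 + α * b y + β * c y) y) (u : ℝ → ℝ → ℝ) (t x : ℝ) :
    Lstar b c m u (fun t x => exp (α * t + β * x)) t x = 0 := by
  simp only [Lstar, Dt_exp_affine, Dx_exp_affine, Dt_const_mul, Dx_const_mul, (hm _).deriv]
  ring

/-- The multiplier of the conservation law generated by the time-translation
characteristic p = −∂ₜu and the adjoint-symmetry Q = exp(m₂t + m₃x) is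
∂ₜQ = m₂Q. -/
theorem stmt_14
    (b c : ℝ → ℝ) (hb : ContDiff ℝ (⊤ : ℕ∞) b) (hc : ContDiff ℝ (⊤ : ℕ∞) c)
    (m₁ m₂ m₃ : ℝ) (hm₁ : m₁ = m₃ ^ 2 - m₂ ^ 2)
    (m B C : ℝ → ℝ)
    (hB : ∀ y, B y = ∫ s in (0:ℝ)..y, b s)
    (hC : ∀ y, C y = ∫ s in (0:ℝ)..y, c s)
    (hmdef : ∀ y, m y = m₁ * y + m₂ * B y + m₃ * C y)
    (Q : ℝ → ℝ → ℝ) (hQdef : ∀ t x, Q t x = Real.exp (m₂ * t + m₃ * x))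
    (u : ℝ → ℝ → ℝ) (hu : Smooth2 u) :
    ∀ t x : ℝ,
      Dt (fun t x =>
          (-(Q t x) * Dt (Dt u) t x - (b (u t x) - m₂) * Q t x * Dt u t x)
            + Q t x * Fop b c m u t x) t x
      + Dx (fun t x =>
          Q t x * Dt (Dx u) t x - (c (u t x) + m₃) * Q t x * Dt u t x) t x
        = m₂ * Q t x * Fop b c m u t x := by
  subst hm₁
  have hm := hasDerivAt_of_eq_linear_add_integrals (m := m) hb.continuous hc.continuous
    fun y => by rw [hmdef, hB, hC]
  have hbd := hb.differentiable (by simp)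
  have hcd := hc.differentiable (by simp)
  have hQ_eq : Q = fun t x => exp (m₂ * t + m₃ * x) := funext fun t => funext (hQdef t)
  have hQ : Smooth2 Q := hQ_eq ▸ smooth2_exp_affine m₂ m₃
  have hDtQ : Dt Q = fun t x => m₂ * Q t x := by rw [hQ_eq, Dt_exp_affine]
  have hDxQ : Dx Q = fun t x => m₃ * Q t x := by rw [hQ_eq, Dx_exp_affine]
  have hΨt : (fun t x => (-(Q t x) * Dt (Dt u) t x - (b (u t x) - m₂) * Q t x * Dt u t x)
        + Q t x * Fop b c m u t x)
      = fun t x => -currentT b u (Dt u) Q t x + Q t x * Fop b c m u t x := by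
    funext t x
    simp only [currentT, hDtQ]
    ring
  have hΨx : (fun t x => Q t x * Dt (Dx u) t x - (c (u t x) + m₃) * Q t x * Dt u t x)
      = fun t x => -currentX c u (Dt u) Q t x := by
    funext t x
    simp only [currentX, hDxQ, hu.Dt_Dx_comm]
    ring
  intro t x
  have hconservation := Dt_currentT_add_Dx_currentX m hbd hcd hu hu.dt hQ t x
  rw [hQ_eq, Lstar_exp_affine_eq_zero hm, ← hQ_eq] at hconservation
  have hFt := hasDerivAt_Fop hbd hcd (fun y => (hm y).differentiableAt) hu t x
  rw [hΨt, hΨx, Dx_neg, Dt_eq_of_hasDerivAt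
    (f := fun t x => -currentT b u (Dt u) Q t x + Q t x * Fop b c m u t x)
    (((smooth2_currentT hb hu hu.dt hQ).hasDerivAt_t t x).neg.add
      ((hQ.hasDerivAt_t t x).mul hFt)), hDtQ]
  linear_combination -hconservation
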